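/- arXiv:1704.02158 — 7 statements merged into one kernel-verified Lean document; each statement's English description precedes it below -/
import Mathlib

section
/- Soundness of the Weak Transitivity rule for poly-dependence atoms: if a pair of teams (X, Y) satisfies the poly-dependence atom =(x̄, ȳz̄z̄ / ū, v̄v̄w̄) (where |ȳ| = |z̄| = |v̄| = |w̄| and juxtaposition denotes concatenation), then (X, Y) satisfies =(x̄, ȳ / ū, w̄). -/
/-!
Soundness of the Weak Transitivity rule for poly-dependence atoms.

A team over `A` is a set of assignments; we model an assignment of team `X` as
a function `s : V → A` and of team `Y` as `s' : W → A`.  For a tuple (list) of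
variables `xs`, `s(x̄)` is `xs.map s` and juxtaposition of tuples is list
concatenation.  The pair `(X, Y)` satisfies the poly-dependence atom
`=(x̄, ȳ / ū, v̄)` iff for all `s ∈ X` and `s' ∈ Y`, `xs.map s = us.map s'`
implies `ys.map s = vs.map s'`.
-/

theorem polydep_weak_transitivity_sound {A V W : Type*} (X : Set (V → A)) (Y : Set (W → A))
    (xs ys zs : List V) (us vs ws : List W)
    (hxu : xs.length = us.length)
    (hyz : ys.length = zs.length) (hzv : zs.length = vs.length)
    (hvw : vs.length = ws.length)
    (h : ∀ s ∈ X, ∀ s' ∈ Y, xs.map s = us.map s' →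
          (ys ++ zs ++ zs).map s = (vs ++ vs ++ ws).map s') :
    ∀ s ∈ X, ∀ s' ∈ Y, xs.map s = us.map s' → ys.map s = ws.map s' := by
  intro s hs s' hs' hx
  have H := h s hs s' hs' hx
  simp only [List.map_append] at H
  have l1 : (ys.map s).length = (vs.map s').length := by
    simp [hyz, hzv]
  have l2 : (zs.map s).length = (vs.map s').length := by simp [hzv]
  obtain ⟨H1, H2⟩ := List.append_inj (by rw [List.append_assoc, List.append_assoc] at H; exact H) l1
  obtain ⟨H3, H4⟩ := List.append_inj H2 l2
  rw [H1, ← H3, H4]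
end

section
/- Downward closure of poly-dependence logic: for every formula φ of PFO(pdep), every structure 𝔄, and all polyteams X⃗ and Y⃗ of 𝔄, if 𝔄 ⊨_X⃗ φ and Y⃗ is a subteam of X⃗ (i.e., Y_i ⊆ X_i for all i ∈ ℕ), then 𝔄 ⊨_Y⃗ φ. -/
universe u

/-- A team over `A` for a given sort: a set of assignments of the (natural
number indexed) variables of that sort. -/
abbrev Team (A : Type) : Type := Set (ℕ → A)

/-- A polyteam over `A`: a team for every sort `i ∈ ℕ`. -/
abbrev PolyTeam (A : Type) : Type := ℕ → Team A

/-- Replace the `i`-th team of a polyteam. -/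
def PolyTeam.upd {A : Type} (X : PolyTeam A) (i : ℕ) (T : Team A) : PolyTeam A :=
  fun k => if k = i then T else X k

/-- `T.sup x = T[A/x]`, the universal supplementation of `T` at `x`. -/
def Team.sup {A : Type} (T : Team A) (x : ℕ) : Team A :=
  {t | ∃ s ∈ T, ∃ a : A, t = Function.update s x a}

/-- `T.supF x F = T[F/x]`, the (lax) existential supplementation of `T` at `x`
along the choice function `F`. -/
def Team.supF {A : Type} (T : Team A) (x : ℕ) (F : (ℕ → A) → Set A) : Team A :=
  {t | ∃ s ∈ T, ∃ a ∈ F s, t = Function.update s x a}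

/-- A `τ`-structure with domain `A`, where the vocabulary `τ` comes with an
arity function `ar`. -/
structure Struc (τ : Type) (ar : τ → ℕ) (A : Type) : Type where
  interp : (r : τ) → (Fin (ar r) → A) → Prop

/-- Syntax of poly first-order logic `PFO(τ)` extended with atoms from `Atom`.
Every variable is a pair of a sort `i : ℕ` (recorded in the constructor) and a
natural number; all variables of an atomic subformula have a single common
sort.  `or` is the global disjunction `∨`, and `lor j` is the local
disjunction `∨ʲ`. -/
inductive PFO (τ : Type) (ar : τ → ℕ) (Atom : Type u) : Type u where
  | atom : Atom → PFO τ ar Atom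
  | eq : (i : ℕ) → ℕ → ℕ → PFO τ ar Atom
  | neq : (i : ℕ) → ℕ → ℕ → PFO τ ar Atom
  | rel : (r : τ) → (i : ℕ) → (Fin (ar r) → ℕ) → PFO τ ar Atom
  | nrel : (r : τ) → (i : ℕ) → (Fin (ar r) → ℕ) → PFO τ ar Atom
  | and : PFO τ ar Atom → PFO τ ar Atom → PFO τ ar Atom
  | or : PFO τ ar Atom → PFO τ ar Atom → PFO τ ar Atom
  | lor : ℕ → PFO τ ar Atom → PFO τ ar Atom → PFO τ ar Atom
  | ex : (i : ℕ) → (x : ℕ) → PFO τ ar Atom → PFO τ ar Atom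
  | all : (i : ℕ) → (x : ℕ) → PFO τ ar Atom → PFO τ ar Atom

/-- Lax polyteam semantics of `PFO` with atoms `Atom`, whose satisfaction
relation on polyteams is given by `AS`. -/
def PFO.Sat {τ : Type} {ar : τ → ℕ} {Atom : Type u} {A : Type}
    (AS : PolyTeam A → Atom → Prop) (M : Struc τ ar A) :
    PFO τ ar Atom → PolyTeam A → Prop
  | .atom a, X => AS X a
  | .eq i x y, X => ∀ s ∈ X i, s x = s y
  | .neq i x y, X => ∀ s ∈ X i, s x ≠ s y
  | .rel r i vs, X => ∀ s ∈ X i, M.interp r (fun k => s (vs k))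
  | .nrel r i vs, X => ∀ s ∈ X i, ¬ M.interp r (fun k => s (vs k))
  | .and φ ψ, X => PFO.Sat AS M φ X ∧ PFO.Sat AS M ψ X
  | .or φ ψ, X => ∃ Y Z : PolyTeam A,
      (∀ k, Y k ∪ Z k = X k) ∧ PFO.Sat AS M φ Y ∧ PFO.Sat AS M ψ Z
  | .lor j φ ψ, X => ∃ Y Z : Team A, Y ∪ Z = X j ∧
      PFO.Sat AS M φ (X.upd j Y) ∧ PFO.Sat AS M ψ (X.upd j Z)
  | .ex i x φ, X => ∃ F : (ℕ → A) → Set A, (∀ s ∈ X i, (F s).Nonempty) ∧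
      PFO.Sat AS M φ (X.upd i ((X i).supF x F))
  | .all i x φ, X => PFO.Sat AS M φ (X.upd i ((X i).sup x))

/-- Free variables of each sort, given the free variables of atoms. -/
def PFO.fv {τ : Type} {ar : τ → ℕ} {Atom : Type u} (afv : Atom → ℕ → Set ℕ) :
    PFO τ ar Atom → ℕ → Set ℕ
  | .atom a => afv a
  | .eq i x y => fun k => if k = i then {x, y} else ∅
  | .neq i x y => fun k => if k = i then {x, y} else ∅
  | .rel _ i vs => fun k => if k = i then Set.range vs else ∅
  | .nrel _ i vs => fun k => if k = i then Set.range vs else ∅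
  | .and φ ψ => fun k => PFO.fv afv φ k ∪ PFO.fv afv ψ k
  | .or φ ψ => fun k => PFO.fv afv φ k ∪ PFO.fv afv ψ k
  | .lor _ φ ψ => fun k => PFO.fv afv φ k ∪ PFO.fv afv ψ k
  | .ex i x φ => fun k => PFO.fv afv φ k \ (if k = i then {x} else ∅)
  | .all i x φ => fun k => PFO.fv afv φ k \ (if k = i then {x} else ∅)

/-- Atom satisfaction for the empty collection of extra atoms. -/
def noAtoms {A : Type} : PolyTeam A → Empty → Prop := fun _ a => a.elim

/-- Free variables of the (nonexistent) atoms of pure `PFO`. -/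
def noAtomsFv : Empty → ℕ → Set ℕ := fun a => a.elim

/-- A poly-dependence atom `=(x̄ⁱ, ȳⁱ / ūʲ, v̄ʲ)`: `x, y` are tuples of
variables of sort `i`, `u, v` tuples of variables of sort `j`, with
`|x̄| = |ū|` and `|ȳ| = |v̄|`. -/
structure PDep where
  i : ℕ
  j : ℕ
  x : List ℕ
  y : List ℕ
  u : List ℕ
  v : List ℕ
  hxu : x.length = u.length
  hyv : y.length = v.length

/-- Satisfaction of a poly-dependence atom by a polyteam. -/
def PDep.Sat {A : Type} (X : PolyTeam A) (d : PDep) : Prop :=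
  ∀ s ∈ X d.i, ∀ s' ∈ X d.j, d.x.map s = d.u.map s' → d.y.map s = d.v.map s'

/-- Downward closure of poly-dependence logic `PFO(pdep)`: satisfaction is
preserved when passing to a subteam of the polyteam. -/
theorem PFO_pdep_downward_closed
    (τ : Type) (ar : τ → ℕ) (φ : PFO τ ar PDep)
    (A : Type) (M : Struc τ ar A) (X Y : PolyTeam A)
    (hX : PFO.Sat PDep.Sat M φ X) (hYX : ∀ i, Y i ⊆ X i) :
    PFO.Sat PDep.Sat M φ Y := by
  induction φ generalizing X Y with
  | atom a =>
    intro s hs s' hs' h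
    exact hX s (hYX _ hs) s' (hYX _ hs') h
  | eq i x y => intro s hs; exact hX s (hYX i hs)
  | neq i x y => intro s hs; exact hX s (hYX i hs)
  | rel r i vs => intro s hs; exact hX s (hYX i hs)
  | nrel r i vs => intro s hs; exact hX s (hYX i hs)
  | and φ ψ ih1 ih2 => exact ⟨ih1 X Y hX.1 hYX, ih2 X Y hX.2 hYX⟩
  | or φ ψ ih1 ih2 =>
    obtain ⟨Yw, Zw, hU, h1, h2⟩ := hX
    refine ⟨fun k => Y k ∩ Yw k, fun k => Y k ∩ Zw k, ?_,
      ih1 Yw _ h1 (fun k => Set.inter_subset_right),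
      ih2 Zw _ h2 (fun k => Set.inter_subset_right)⟩
    intro k
    rw [← Set.inter_union_distrib_left, hU]
    exact Set.inter_eq_left.mpr (hYX k)
  | lor j φ ψ ih1 ih2 =>
    obtain ⟨Yw, Zw, hU, h1, h2⟩ := hX
    refine ⟨Y j ∩ Yw, Y j ∩ Zw, ?_, ih1 _ _ h1 ?_, ih2 _ _ h2 ?_⟩
    · rw [← Set.inter_union_distrib_left, hU]
      exact Set.inter_eq_left.mpr (hYX j)
    all_goals
      intro k
      simp only [PolyTeam.upd]
      split
      · exact Set.inter_subset_right
      · exact hYX k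
  | ex i x φ ih =>
    obtain ⟨F, hF, h⟩ := hX
    refine ⟨F, fun s hs => hF s (hYX i hs), ih _ _ h ?_⟩
    intro k
    simp only [PolyTeam.upd]
    split
    · rintro t ⟨s, hs, a, ha, rfl⟩
      exact ⟨s, hYX i hs, a, ha, rfl⟩
    · exact hYX k
  | all i x φ ih =>
    refine ih _ _ hX ?_
    intro k
    simp only [PolyTeam.upd]
    split
    · rintro t ⟨s, hs, a, rfl⟩
      exact ⟨s, hYX i hs, a, rfl⟩
    · exact hYX k
end

section
/- Union closure of poly-inclusion logic: for every formula ψ of PFO(pinc), every structure 𝔄, and all polyteams X⃗ and Y⃗ of 𝔄 (with the same domains), if 𝔄 ⊨_X⃗ ψ and 𝔄 ⊨_Y⃗ ψ, then 𝔄 ⊨_{X⃗∪Y⃗} ψ, where X⃗∪Y⃗ = (X_i ∪ Y_i)_{i∈ℕ}. -/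
universe u

/-- A poly-inclusion atom `x̄ⁱ ⊆ ȳʲ`: `x` is a tuple of variables of sort `i`
and `y` a tuple of variables of sort `j` with `|x̄| = |ȳ|`. -/
structure PInc where
  i : ℕ
  j : ℕ
  x : List ℕ
  y : List ℕ
  hxy : x.length = y.length

/-- Satisfaction of a poly-inclusion atom by a polyteam. -/
def PInc.Sat {A : Type} (X : PolyTeam A) (d : PInc) : Prop :=
  ∀ s ∈ X d.i, ∃ s' ∈ X d.j, d.x.map s = d.y.map s'

lemma upd_union {A : Type} (X Y : PolyTeam A) (j : ℕ) (T₁ T₂ : Team A) :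
    PolyTeam.upd (fun i => X i ∪ Y i) j (T₁ ∪ T₂)
      = fun k => X.upd j T₁ k ∪ Y.upd j T₂ k := by
  funext k
  unfold PolyTeam.upd
  split <;> rfl

lemma pinc_union_closed_aux
    {τ : Type} {ar : τ → ℕ} (ψ : PFO τ ar PInc)
    {A : Type} (M : Struc τ ar A) :
    ∀ X Y : PolyTeam A,
      PFO.Sat PInc.Sat M ψ X → PFO.Sat PInc.Sat M ψ Y →
      PFO.Sat PInc.Sat M ψ (fun i => X i ∪ Y i) := by
  induction ψ with
  | atom a =>
    intro X Y hX hY s hs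
    rcases hs with hs | hs
    · rcases hX s hs with ⟨s', hs', h⟩
      exact ⟨s', Or.inl hs', h⟩
    · rcases hY s hs with ⟨s', hs', h⟩
      exact ⟨s', Or.inr hs', h⟩
  | eq i x y =>
    intro X Y hX hY s hs
    rcases hs with hs | hs
    · exact hX s hs
    · exact hY s hs
  | neq i x y =>
    intro X Y hX hY s hs
    rcases hs with hs | hs
    · exact hX s hs
    · exact hY s hs
  | rel r i vs =>
    intro X Y hX hY s hs
    rcases hs with hs | hs
    · exact hX s hs
    · exact hY s hs
  | nrel r i vs =>
    intro X Y hX hY s hs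
    rcases hs with hs | hs
    · exact hX s hs
    · exact hY s hs
  | and φ χ ihφ ihχ =>
    intro X Y hX hY
    exact ⟨ihφ X Y hX.1 hY.1, ihχ X Y hX.2 hY.2⟩
  | or φ χ ihφ ihχ =>
    intro X Y hX hY
    obtain ⟨Y₁, Z₁, h₁, hφ₁, hχ₁⟩ := hX
    obtain ⟨Y₂, Z₂, h₂, hφ₂, hχ₂⟩ := hY
    refine ⟨fun k => Y₁ k ∪ Y₂ k, fun k => Z₁ k ∪ Z₂ k, ?_,
      ihφ Y₁ Y₂ hφ₁ hφ₂, ihχ Z₁ Z₂ hχ₁ hχ₂⟩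
    intro k
    show Y₁ k ∪ Y₂ k ∪ (Z₁ k ∪ Z₂ k) = X k ∪ Y k
    rw [← h₁ k, ← h₂ k]
    ext s
    constructor
    · rintro ((h | h) | (h | h)) <;> simp [h]
    · rintro ((h | h) | (h | h)) <;> simp [h]
  | lor j φ χ ihφ ihχ =>
    intro X Y hX hY
    obtain ⟨Y₁, Z₁, h₁, hφ₁, hχ₁⟩ := hX
    obtain ⟨Y₂, Z₂, h₂, hφ₂, hχ₂⟩ := hY
    refine ⟨Y₁ ∪ Y₂, Z₁ ∪ Z₂, ?_, ?_, ?_⟩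
    · show Y₁ ∪ Y₂ ∪ (Z₁ ∪ Z₂) = X j ∪ Y j
      rw [← h₁, ← h₂]
      ext s
      constructor
      · rintro ((h | h) | (h | h)) <;> simp [h]
      · rintro ((h | h) | (h | h)) <;> simp [h]
    · rw [upd_union]
      exact ihφ _ _ hφ₁ hφ₂
    · rw [show (Z₁ ∪ Z₂ : Team A) = Z₁ ∪ Z₂ from rfl, upd_union]
      exact ihχ _ _ hχ₁ hχ₂
  | ex i x φ ihφ =>
    intro X Y hX hY
    obtain ⟨F₁, hne₁, hφ₁⟩ := hX
    obtain ⟨F₂, hne₂, hφ₂⟩ := hY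
    refine ⟨fun s => {a | (s ∈ X i ∧ a ∈ F₁ s) ∨ (s ∈ Y i ∧ a ∈ F₂ s)}, ?_, ?_⟩
    · intro s hs
      rcases hs with hs | hs
      · obtain ⟨a, ha⟩ := hne₁ s hs
        exact ⟨a, Or.inl ⟨hs, ha⟩⟩
      · obtain ⟨a, ha⟩ := hne₂ s hs
        exact ⟨a, Or.inr ⟨hs, ha⟩⟩
    · have hsup : ((fun i' => X i' ∪ Y i') i).supF x
          (fun s => {a | (s ∈ X i ∧ a ∈ F₁ s) ∨ (s ∈ Y i ∧ a ∈ F₂ s)})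
          = (X i).supF x F₁ ∪ (Y i).supF x F₂ := by
        ext t
        constructor
        · rintro ⟨s, _, a, (⟨hs, ha⟩ | ⟨hs, ha⟩), rfl⟩
          · exact Or.inl ⟨s, hs, a, ha, rfl⟩
          · exact Or.inr ⟨s, hs, a, ha, rfl⟩
        · rintro (⟨s, hs, a, ha, rfl⟩ | ⟨s, hs, a, ha, rfl⟩)
          · exact ⟨s, Or.inl hs, a, Or.inl ⟨hs, ha⟩, rfl⟩
          · exact ⟨s, Or.inr hs, a, Or.inr ⟨hs, ha⟩, rfl⟩
      rw [hsup, upd_union]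
      exact ihφ _ _ hφ₁ hφ₂
  | all i x φ ihφ =>
    intro X Y hX hY
    show PFO.Sat PInc.Sat M φ _
    have hsup : ((fun i' => X i' ∪ Y i') i).sup x = (X i).sup x ∪ (Y i).sup x := by
      ext t
      constructor
      · rintro ⟨s, (hs | hs), a, rfl⟩
        · exact Or.inl ⟨s, hs, a, rfl⟩
        · exact Or.inr ⟨s, hs, a, rfl⟩
      · rintro (⟨s, hs, a, rfl⟩ | ⟨s, hs, a, rfl⟩)
        · exact ⟨s, Or.inl hs, a, rfl⟩
        · exact ⟨s, Or.inr hs, a, rfl⟩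
    rw [hsup, upd_union]
    exact ihφ _ _ hX hY

/-- Union closure of poly-inclusion logic `PFO(pinc)`: if two polyteams
satisfy a formula, then so does their (componentwise) union. -/
theorem PFO_pinc_union_closed
    (τ : Type) (ar : τ → ℕ) (ψ : PFO τ ar PInc)
    (A : Type) (M : Struc τ ar A) (X Y : PolyTeam A)
    (hX : PFO.Sat PInc.Sat M ψ X) (hY : PFO.Sat PInc.Sat M ψ Y) :
    PFO.Sat PInc.Sat M ψ (fun i => X i ∪ Y i) := by
  exact pinc_union_closed_aux ψ M X Y hX hY
end

section
/- Elimination of global disjunction: for every formula φ of PFO there exists a formula φ' of PFO using only local disjunctions ∨ⁱ (and no global disjunction ∨) such that φ and φ' are equivalent, i.e., for every structure 𝔄 and every polyteam X⃗ of 𝔄 whose domains contain the free variables of φ and φ', 𝔄 ⊨_X⃗ φ if and only if 𝔄 ⊨_X⃗ φ'. -/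
universe u

/-- `φ.noGlobalOr` : the formula uses only local disjunctions `∨ⁱ` (no global
disjunction `∨`). -/
def PFO.noGlobalOr {τ : Type} {ar : τ → ℕ} {Atom : Type u} :
    PFO τ ar Atom → Prop
  | .atom _ => True
  | .eq _ _ _ => True
  | .neq _ _ _ => True
  | .rel _ _ _ => True
  | .nrel _ _ _ => True
  | .and φ ψ => PFO.noGlobalOr φ ∧ PFO.noGlobalOr ψ
  | .or _ _ => False
  | .lor _ φ ψ => PFO.noGlobalOr φ ∧ PFO.noGlobalOr ψ
  | .ex _ _ φ => PFO.noGlobalOr φ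
  | .all _ _ φ => PFO.noGlobalOr φ

/-
A formula without global disjunction is evaluated sort by sort: it holds in `X` iff it holds in
every `X.only i`, the polyteam keeping only the `i`-th team of `X`. The relativization `φ|ᵢ` of a
formula, which replaces its atoms of the other sorts by a tautology, holds in `X` iff `φ` holds in
`X.only i`. Hence, for `φ, ψ` without global disjunction, `φ ∨ ψ` is equivalent to the
conjunction of the `φ|ᵢ ∨ⁱ ψ|ᵢ` over the sorts `i` occurring in `φ` or `ψ`: splits of the single
teams `X i` assemble into a split of the whole polyteam, and a formula holds wherever the teams of
its own sorts are empty. Global disjunctions are then eliminated innermost first.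
-/

namespace PolyTeam

variable {A : Type}

def only (X : PolyTeam A) (i : ℕ) : PolyTeam A :=
  fun k => if k = i then X k else ∅

@[simp]
lemma only_self (X : PolyTeam A) (i : ℕ) : X.only i i = X i := if_pos rfl

@[simp]
lemma only_of_ne (X : PolyTeam A) {i k : ℕ} (h : k ≠ i) : X.only i k = ∅ := if_neg h

@[simp]
lemma upd_apply_self (X : PolyTeam A) (i : ℕ) (T : Team A) : X.upd i T i = T := if_pos rfl

@[simp]
lemma upd_apply_of_ne (X : PolyTeam A) {i k : ℕ} (T : Team A) (h : k ≠ i) :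
    X.upd i T k = X k := if_neg h

lemma upd_eq_self {X : PolyTeam A} {i : ℕ} {T : Team A} (h : X i = T) : X.upd i T = X := by
  funext k
  rcases eq_or_ne k i with rfl | hk
  · simp [h]
  · simp [hk]

lemma only_upd_self (X : PolyTeam A) (i : ℕ) (T : Team A) :
    (X.upd i T).only i = (X.only i).upd i T := by
  funext k
  rcases eq_or_ne k i with rfl | hk
  · simp
  · simp [hk]

lemma only_upd_of_ne (X : PolyTeam A) {i j : ℕ} (T : Team A) (h : i ≠ j) :
    (X.upd j T).only i = X.only i := by
  funext k
  rcases eq_or_ne k i with rfl | hk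
  · simp [h]
  · simp [hk]

lemma only_upd_apply (X Y : PolyTeam A) (i : ℕ) : (X.only i).upd i (Y i) = Y.only i := by
  funext k
  rcases eq_or_ne k i with rfl | hk
  · simp
  · simp [hk]

lemma only_eq_self {X : PolyTeam A} {i : ℕ} (h : ∀ k ≠ i, X k = ∅) : X.only i = X := by
  funext k
  rcases eq_or_ne k i with rfl | hk
  · simp
  · simp [hk, h k hk]

lemma only_union_only {X Y Z : PolyTeam A} (h : ∀ k, Y k ∪ Z k = X k) (i k : ℕ) :
    Y.only i k ∪ Z.only i k = X.only i k := by
  rcases eq_or_ne k i with rfl | hk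
  · simpa using h k
  · simp [hk]

lemma upd_union_upd (X : PolyTeam A) {i : ℕ} {T U : Team A} (h : T ∪ U = X i) (k : ℕ) :
    X.upd i T k ∪ X.upd i U k = X k := by
  rcases eq_or_ne k i with rfl | hk
  · simpa using h
  · simp [hk]

lemma forall_mem_iff_forall_only (X : PolyTeam A) (i : ℕ) (P : (ℕ → A) → Prop) :
    (∀ s ∈ X i, P s) ↔ ∀ k, ∀ s ∈ X.only k i, P s := by
  rw [← and_forall_ne i, only_self, iff_self_and]
  intro _ k hk
  simp [X.only_of_ne hk.symm]

lemma upd_iff_of_forall_only {P : PolyTeam A → Prop}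
    (hP : ∀ X, P X ↔ ∀ i, P (X.only i)) (X : PolyTeam A) (j : ℕ) (T : Team A) :
    P (X.upd j T) ↔ P ((X.only j).upd j T) ∧ ∀ i ≠ j, P (X.only i) := by
  rw [hP, ← and_forall_ne j, only_upd_self]
  exact and_congr_right' (forall₂_congr fun i hi => by rw [X.only_upd_of_ne T hi])

end PolyTeam

@[simp]
lemma Team.sup_empty {A : Type} (x : ℕ) : (∅ : Team A).sup x = ∅ := by
  simp [Team.sup]

@[simp]
lemma Team.supF_empty {A : Type} (x : ℕ) (F : (ℕ → A) → Set A) : (∅ : Team A).supF x F = ∅ := by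
  simp [Team.supF]

namespace PFO

open PolyTeam

variable {τ : Type} {ar : τ → ℕ}

def sorts : PFO τ ar Empty → List ℕ
  | .atom a => a.elim
  | .eq i _ _ | .neq i _ _ | .rel _ i _ | .nrel _ i _ => [i]
  | .and φ ψ | .or φ ψ => φ.sorts ++ ψ.sorts
  | .lor j φ ψ => j :: (φ.sorts ++ ψ.sorts)
  | .ex i _ φ | .all i _ φ => i :: φ.sorts

def relativize (i : ℕ) : PFO τ ar Empty → PFO τ ar Empty
  | .atom a => a.elim
  | .eq k x y => if k = i then .eq k x y else .eq k 0 0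
  | .neq k x y => if k = i then .neq k x y else .eq k 0 0
  | .rel r k vs => if k = i then .rel r k vs else .eq k 0 0
  | .nrel r k vs => if k = i then .nrel r k vs else .eq k 0 0
  | .and φ ψ => .and (φ.relativize i) (ψ.relativize i)
  | .or φ ψ => .or (φ.relativize i) (ψ.relativize i)
  | .lor j φ ψ => .lor j (φ.relativize i) (ψ.relativize i)
  | .ex k x φ => .ex k x (φ.relativize i)
  | .all k x φ => .all k x (φ.relativize i)

def sortwiseOr (φ ψ : PFO τ ar Empty) : List ℕ → PFO τ ar Empty
  | [] => .eq 0 0 0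
  | i :: l => .and (.lor i (φ.relativize i) (ψ.relativize i)) (sortwiseOr φ ψ l)

def elimOr : PFO τ ar Empty → PFO τ ar Empty
  | .and φ ψ => .and φ.elimOr ψ.elimOr
  | .or φ ψ => sortwiseOr φ.elimOr ψ.elimOr (φ.elimOr.sorts ++ ψ.elimOr.sorts)
  | .lor j φ ψ => .lor j φ.elimOr ψ.elimOr
  | .ex i x φ => .ex i x φ.elimOr
  | .all i x φ => .all i x φ.elimOr
  | θ => θ

lemma noGlobalOr_relativize (i : ℕ) {θ : PFO τ ar Empty} (hθ : θ.noGlobalOr) :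
    (θ.relativize i).noGlobalOr := by
  induction θ with
  | atom a => exact a.elim
  | eq k | neq k | rel _ k | nrel _ k => unfold relativize; split_ifs <;> trivial
  | and _ _ ihφ ihψ | lor _ _ _ ihφ ihψ => exact ⟨ihφ hθ.1, ihψ hθ.2⟩
  | or => exact hθ.elim
  | ex _ _ _ ih | all _ _ _ ih => exact ih hθ

lemma noGlobalOr_sortwiseOr {φ ψ : PFO τ ar Empty} (hφ : φ.noGlobalOr) (hψ : ψ.noGlobalOr) :
    ∀ l, (sortwiseOr φ ψ l).noGlobalOr
  | [] => trivial
  | i :: l =>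
    ⟨⟨noGlobalOr_relativize i hφ, noGlobalOr_relativize i hψ⟩, noGlobalOr_sortwiseOr hφ hψ l⟩

lemma noGlobalOr_elimOr (θ : PFO τ ar Empty) : θ.elimOr.noGlobalOr := by
  induction θ with
  | atom a => exact a.elim
  | eq | neq | rel | nrel => trivial
  | and _ _ ihφ ihψ | lor _ _ _ ihφ ihψ => exact ⟨ihφ, ihψ⟩
  | or _ _ ihφ ihψ => exact noGlobalOr_sortwiseOr ihφ ihψ _
  | ex _ _ _ ih | all _ _ _ ih => exact ih

variable {A : Type} (M : Struc τ ar A)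

lemma sat_lor_of_empty {X : PolyTeam A} {j : ℕ} (h : X j = ∅) (φ ψ : PFO τ ar Empty) :
    Sat noAtoms M (.lor j φ ψ) X ↔ Sat noAtoms M φ X ∧ Sat noAtoms M ψ X := by
  simp [Sat, h, upd_eq_self h]

lemma sat_ex_of_empty {X : PolyTeam A} {j : ℕ} (h : X j = ∅) (x : ℕ) (φ : PFO τ ar Empty) :
    Sat noAtoms M (.ex j x φ) X ↔ Sat noAtoms M φ X := by
  simp [Sat, h, upd_eq_self h]

lemma sat_all_of_empty {X : PolyTeam A} {j : ℕ} (h : X j = ∅) (x : ℕ) (φ : PFO τ ar Empty) :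
    Sat noAtoms M (.all j x φ) X ↔ Sat noAtoms M φ X := by
  simp [Sat, h, upd_eq_self h]

lemma sat_of_forall_mem_sorts_empty (θ : PFO τ ar Empty) {X : PolyTeam A}
    (h : ∀ k ∈ θ.sorts, X k = ∅) : Sat noAtoms M θ X := by
  induction θ with
  | atom a => exact a.elim
  | eq i | neq i | rel _ i | nrel _ i =>
    intro s hs
    simp [h i (by simp [sorts])] at hs
  | and φ ψ ihφ ihψ =>
    exact ⟨ihφ fun k hk => h k (List.mem_append_left _ hk),
      ihψ fun k hk => h k (List.mem_append_right _ hk)⟩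
  | or φ ψ ihφ ihψ =>
    exact ⟨X, X, fun _ => Set.union_self _, ihφ fun k hk => h k (List.mem_append_left _ hk),
      ihψ fun k hk => h k (List.mem_append_right _ hk)⟩
  | lor j φ ψ ihφ ihψ =>
    rw [sat_lor_of_empty M (h j List.mem_cons_self)]
    exact ⟨ihφ fun k hk => h k (by simp [sorts, hk]), ihψ fun k hk => h k (by simp [sorts, hk])⟩
  | ex j x φ ih =>
    rw [sat_ex_of_empty M (h j List.mem_cons_self)]
    exact ih fun k hk => h k (List.mem_cons_of_mem _ hk)
  | all j x φ ih =>
    rw [sat_all_of_empty M (h j List.mem_cons_self)]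
    exact ih fun k hk => h k (List.mem_cons_of_mem _ hk)

lemma sat_iff_forall_sat_only {θ : PFO τ ar Empty} (hθ : θ.noGlobalOr) (X : PolyTeam A) :
    Sat noAtoms M θ X ↔ ∀ i, Sat noAtoms M θ (X.only i) := by
  induction θ generalizing X with
  | atom a => exact a.elim
  | eq i | neq i | rel _ i | nrel _ i => exact X.forall_mem_iff_forall_only i _
  | and φ ψ ihφ ihψ =>
    simp only [Sat]
    rw [ihφ hθ.1 X, ihψ hθ.2 X, forall_and]
  | or => exact hθ.elim
  | lor j φ ψ ihφ ihψ =>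
    have hφ := X.upd_iff_of_forall_only (ihφ hθ.1) j
    have hψ := X.upd_iff_of_forall_only (ihψ hθ.2) j
    rw [← and_forall_ne j,
      forall₂_congr fun i hi => sat_lor_of_empty M (X.only_of_ne (Ne.symm hi)) φ ψ]
    simp only [Sat, hφ, hψ, only_self]
    aesop
  | ex j x φ ih =>
    rw [← and_forall_ne j,
      forall₂_congr fun i hi => sat_ex_of_empty M (X.only_of_ne (Ne.symm hi)) x φ]
    simp only [Sat, X.upd_iff_of_forall_only (ih hθ) j, only_self, ← and_assoc,
      exists_and_right]
  | all j x φ ih =>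
    rw [← and_forall_ne j,
      forall₂_congr fun i hi => sat_all_of_empty M (X.only_of_ne (Ne.symm hi)) x φ]
    simp only [Sat, X.upd_iff_of_forall_only (ih hθ) j, only_self]

lemma sat_iff_forall_mem_sorts_sat_only {θ : PFO τ ar Empty} (hθ : θ.noGlobalOr)
    (X : PolyTeam A) :
    Sat noAtoms M θ X ↔ ∀ i ∈ θ.sorts, Sat noAtoms M θ (X.only i) := by
  rw [sat_iff_forall_sat_only M hθ]
  refine ⟨fun h i _ => h i, fun h i => ?_⟩
  by_cases hi : i ∈ θ.sorts
  · exact h i hi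
  · exact sat_of_forall_mem_sorts_empty M θ fun k hk => X.only_of_ne (ne_of_mem_of_not_mem hk hi)

lemma sat_relativize (i : ℕ) (θ : PFO τ ar Empty) (X : PolyTeam A) :
    Sat noAtoms M (θ.relativize i) X ↔ Sat noAtoms M θ (X.only i) := by
  induction θ generalizing X with
  | atom a => exact a.elim
  | eq k | neq k | rel _ k | nrel _ k =>
    rcases eq_or_ne k i with rfl | hk
    · simp [relativize, Sat]
    · simp [relativize, Sat, hk]
  | and φ ψ ihφ ihψ => simp only [relativize, Sat, ihφ, ihψ]
  | or φ ψ ihφ ihψ =>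
    simp only [relativize, Sat, ihφ, ihψ]
    constructor
    · rintro ⟨Y, Z, hX, hY, hZ⟩
      exact ⟨Y.only i, Z.only i, only_union_only hX i, hY, hZ⟩
    · rintro ⟨Y, Z, hX, hY, hZ⟩
      have hout : ∀ k ≠ i, Y k = ∅ ∧ Z k = ∅ := fun k hk =>
        Set.union_empty_iff.mp ((hX k).trans (X.only_of_ne hk))
      refine ⟨X.upd i (Y i), X.upd i (Z i), X.upd_union_upd (by simpa using hX i), ?_, ?_⟩
      · rwa [only_upd_self, only_upd_apply, only_eq_self fun k hk => (hout k hk).1]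
      · rwa [only_upd_self, only_upd_apply, only_eq_self fun k hk => (hout k hk).2]
  | lor j φ ψ ihφ ihψ =>
    rcases eq_or_ne j i with rfl | hj
    · simp only [relativize, Sat, ihφ, ihψ, only_upd_self, only_self]
    · rw [sat_lor_of_empty M (X.only_of_ne hj)]
      simp only [relativize, Sat, ihφ, ihψ, X.only_upd_of_ne _ hj.symm]
      exact ⟨fun ⟨_, _, _, h⟩ => h, fun h => ⟨X j, X j, Set.union_self _, h⟩⟩
  | ex j x φ ih =>
    rcases eq_or_ne j i with rfl | hj
    · simp only [relativize, Sat, ih, only_upd_self, only_self]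
    · rw [sat_ex_of_empty M (X.only_of_ne hj)]
      simp only [relativize, Sat, ih, X.only_upd_of_ne _ hj.symm]
      exact ⟨fun ⟨_, _, h⟩ => h, fun h => ⟨fun _ => Set.univ, fun s _ => ⟨s 0, trivial⟩, h⟩⟩
  | all j x φ ih =>
    rcases eq_or_ne j i with rfl | hj
    · simp only [relativize, Sat, ih, only_upd_self, only_self]
    · rw [sat_all_of_empty M (X.only_of_ne hj)]
      simp only [relativize, Sat, ih, X.only_upd_of_ne _ hj.symm]

lemma sat_sortwiseOr (φ ψ : PFO τ ar Empty) (l : List ℕ) (X : PolyTeam A) :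
    Sat noAtoms M (sortwiseOr φ ψ l) X ↔ ∀ i ∈ l, ∃ Y Z : Team A, Y ∪ Z = X i ∧
      Sat noAtoms M φ ((X.only i).upd i Y) ∧ Sat noAtoms M ψ ((X.only i).upd i Z) := by
  induction l with
  | nil => simp [sortwiseOr, Sat]
  | cons i l ih =>
    simp only [sortwiseOr, Sat, sat_relativize, only_upd_self, ih, List.forall_mem_cons]

lemma sat_or_iff_sat_sortwiseOr {φ ψ : PFO τ ar Empty} (hφ : φ.noGlobalOr) (hψ : ψ.noGlobalOr)
    (X : PolyTeam A) :
    Sat noAtoms M (.or φ ψ) X ↔ Sat noAtoms M (sortwiseOr φ ψ (φ.sorts ++ ψ.sorts)) X := by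
  rw [sat_sortwiseOr]
  constructor
  · rintro ⟨Y, Z, hX, hY, hZ⟩ i -
    refine ⟨Y i, Z i, hX i, ?_, ?_⟩
    · rw [only_upd_apply]; exact (sat_iff_forall_sat_only M hφ Y).1 hY i
    · rw [only_upd_apply]; exact (sat_iff_forall_sat_only M hψ Z).1 hZ i
  · intro h
    have split : ∀ i, ∃ Y Z : Team A, Y ∪ Z = X i ∧ (i ∈ φ.sorts ++ ψ.sorts →
        Sat noAtoms M φ ((X.only i).upd i Y) ∧ Sat noAtoms M ψ ((X.only i).upd i Z)) := by
      intro i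
      by_cases hi : i ∈ φ.sorts ++ ψ.sorts
      · obtain ⟨Y, Z, hX, hY, hZ⟩ := h i hi
        exact ⟨Y, Z, hX, fun _ => ⟨hY, hZ⟩⟩
      · exact ⟨X i, X i, Set.union_self _, fun h => (hi h).elim⟩
    choose Y Z hX hYZ using split
    refine ⟨Y, Z, hX, (sat_iff_forall_mem_sorts_sat_only M hφ Y).2 fun i hi => ?_,
      (sat_iff_forall_mem_sorts_sat_only M hψ Z).2 fun i hi => ?_⟩
    · rw [← only_upd_apply X]; exact (hYZ i (List.mem_append_left _ hi)).1
    · rw [← only_upd_apply X]; exact (hYZ i (List.mem_append_right _ hi)).2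

lemma sat_elimOr (θ : PFO τ ar Empty) (X : PolyTeam A) :
    Sat noAtoms M θ.elimOr X ↔ Sat noAtoms M θ X := by
  induction θ generalizing X with
  | atom a => exact a.elim
  | eq | neq | rel | nrel => rfl
  | or φ ψ ihφ ihψ =>
    rw [elimOr, ← sat_or_iff_sat_sortwiseOr M φ.noGlobalOr_elimOr ψ.noGlobalOr_elimOr]
    simp only [Sat, ihφ, ihψ]
  | and _ _ ihφ ihψ | lor _ _ _ ihφ ihψ => simp only [elimOr, Sat, ihφ, ihψ]
  | ex _ _ _ ih | all _ _ _ ih => simp only [elimOr, Sat, ih]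

end PFO

/-- Elimination of global disjunction: every `PFO` formula is equivalent to a
`PFO` formula using only local disjunctions `∨ⁱ`. -/
theorem PFO_eliminate_global_or (τ : Type) (ar : τ → ℕ) (φ : PFO τ ar Empty) :
    ∃ φ' : PFO τ ar Empty, φ'.noGlobalOr ∧
      ∀ (A : Type) (M : Struc τ ar A) (X : PolyTeam A),
        PFO.Sat noAtoms M φ X ↔ PFO.Sat noAtoms M φ' X :=
  ⟨φ.elimOr, φ.noGlobalOr_elimOr, fun _ M X => (PFO.sat_elimOr M φ X).symm⟩
end

section
/- The poly-constancy atom =c(x¹ / x²) cannot be expressed in PFO(dep): there is no PFO(dep) formula φ(x¹, x²), where x¹ is a variable of sort 1 and x² a variable of sort 2, such that for every structure 𝔄 and every polyteam X⃗ = (X₁, X₂) with X₁ a team with domain {x¹} and X₂ a team with domain {x²}, 𝔄 ⊨_X⃗ φ(x¹, x²) holds if and only if s(x¹) = s'(x²) for all s ∈ X₁ and s' ∈ X₂. -/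
universe u

/-- A standard (uni-sort) dependence atom `=(x̄, ȳ)` whose variables are all
of the sort `i`. -/
structure Dep where
  i : ℕ
  x : List ℕ
  y : List ℕ

/-- Satisfaction of a dependence atom by a polyteam: for all `s, s'` in the
`i`-th team, `s(x̄) = s'(x̄)` implies `s(ȳ) = s'(ȳ)`. -/
def Dep.Sat {A : Type} (X : PolyTeam A) (d : Dep) : Prop :=
  ∀ s ∈ X d.i, ∀ s' ∈ X d.i, d.x.map s = d.x.map s' → d.y.map s = d.y.map s'

/-- Free variables of a dependence atom. -/
def Dep.fv (d : Dep) : ℕ → Set ℕ :=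
  fun k => if k = d.i then {v | v ∈ d.x ∨ v ∈ d.y} else ∅

/-- Mix two polyteams: take sort `2` from `Y` and all other sorts from `X`. -/
def mixPT {A : Type} (X Y : PolyTeam A) : PolyTeam A :=
  fun k => if k = 2 then Y 2 else X k

lemma mixPT_upd {A : Type} (X Y : PolyTeam A) (i : ℕ) (S T : Team A) :
    (mixPT X Y).upd i (if i = 2 then T else S) = mixPT (X.upd i S) (Y.upd i T) := by
  funext k
  simp only [mixPT, PolyTeam.upd]
  by_cases hk2 : k = 2 <;> by_cases hki : k = i <;> by_cases hi2 : i = 2 <;> simp_all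

lemma mixPT_sat {A τ : Type} {ar : τ → ℕ} (M : Struc τ ar A) (φ : PFO τ ar Dep) :
    ∀ X Y : PolyTeam A, PFO.Sat Dep.Sat M φ X → PFO.Sat Dep.Sat M φ Y →
      PFO.Sat Dep.Sat M φ (mixPT X Y) := by
  induction φ with
  | atom d =>
    intro X Y hX hY
    by_cases h : d.i = 2
    · intro s hs s' hs'
      simp only [mixPT, h, if_pos] at hs hs'
      exact hY s (by rw [h]; exact hs) s' (by rw [h]; exact hs')
    · intro s hs s' hs'
      simp only [mixPT, h, if_neg] at hs hs'
      exact hX s hs s' hs'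
  | eq i x y =>
    intro X Y hX hY s hs
    by_cases h : i = 2
    · subst h; simp only [mixPT, if_pos] at hs; exact hY s hs
    · simp only [mixPT, h, if_neg] at hs; exact hX s hs
  | neq i x y =>
    intro X Y hX hY s hs
    by_cases h : i = 2
    · subst h; simp only [mixPT, if_pos] at hs; exact hY s hs
    · simp only [mixPT, h, if_neg] at hs; exact hX s hs
  | rel r i vs =>
    intro X Y hX hY s hs
    by_cases h : i = 2
    · subst h; simp only [mixPT, if_pos] at hs; exact hY s hs
    · simp only [mixPT, h, if_neg] at hs; exact hX s hs
  | nrel r i vs =>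
    intro X Y hX hY s hs
    by_cases h : i = 2
    · subst h; simp only [mixPT, if_pos] at hs; exact hY s hs
    · simp only [mixPT, h, if_neg] at hs; exact hX s hs
  | and φ ψ ihφ ihψ =>
    intro X Y hX hY
    exact ⟨ihφ X Y hX.1 hY.1, ihψ X Y hX.2 hY.2⟩
  | or φ ψ ihφ ihψ =>
    intro X Y hX hY
    obtain ⟨U, V, hUV, hU, hV⟩ := hX
    obtain ⟨U', V', hUV', hU', hV'⟩ := hY
    refine ⟨mixPT U U', mixPT V V', ?_, ihφ U U' hU hU', ihψ V V' hV hV'⟩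
    intro k
    by_cases h : k = 2
    · simp only [mixPT, h, if_pos]; exact hUV' 2
    · simp only [mixPT, if_neg h]; exact hUV k
  | lor j φ ψ ihφ ihψ =>
    intro X Y hX hY
    obtain ⟨S, T, hST, hS, hT⟩ := hX
    obtain ⟨S', T', hST', hS', hT'⟩ := hY
    refine ⟨if j = 2 then S' else S, if j = 2 then T' else T, ?_, ?_, ?_⟩
    · by_cases h : j = 2
      · subst h; simp only [if_pos, mixPT]; exact hST'
      · simp only [if_neg h, mixPT, h]; exact hST
    · rw [mixPT_upd]; exact ihφ _ _ hS hS'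
    · rw [mixPT_upd]; exact ihψ _ _ hT hT'
  | ex i x φ ihφ =>
    intro X Y hX hY
    obtain ⟨F, hFne, hF⟩ := hX
    obtain ⟨F', hFne', hF'⟩ := hY
    refine ⟨if i = 2 then F' else F, ?_, ?_⟩
    · intro s hs
      by_cases h : i = 2
      · subst h; simp only [mixPT, if_pos] at hs ⊢; exact hFne' s hs
      · simp only [mixPT, h, if_neg, if_neg h] at hs ⊢; exact hFne s hs
    · by_cases h : i = 2
      · subst h
        have h1 : ((mixPT X Y) 2).supF x (if 2 = 2 then F' else F) = (Y 2).supF x F' := by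
          simp [mixPT]
        rw [h1]
        have h2 := mixPT_upd X Y 2 ((X 2).supF x F) ((Y 2).supF x F')
        rw [if_pos rfl] at h2
        rw [h2]
        exact ihφ _ _ hF hF'
      · have : ((mixPT X Y) i).supF x (if i = 2 then F' else F) = (X i).supF x F := by
          simp [mixPT, h]
        rw [this]
        have := mixPT_upd X Y i ((X i).supF x F) ((Y i).supF x F')
        rw [if_neg h] at this
        rw [this]
        exact ihφ _ _ hF hF'
  | all i x φ ihφ =>
    intro X Y hX hY
    by_cases h : i = 2
    · subst h
      have h2 : ((mixPT X Y) 2).sup x = (Y 2).sup x := by simp [mixPT]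
      rw [PFO.Sat, h2]
      have h3 := mixPT_upd X Y 2 ((X 2).sup x) ((Y 2).sup x)
      rw [if_pos rfl] at h3
      rw [h3]
      exact ihφ _ _ hX hY
    · have h2 : ((mixPT X Y) i).sup x = (X i).sup x := by simp [mixPT, h]
      rw [PFO.Sat]
      rw [h2]
      have := mixPT_upd X Y i ((X i).sup x) ((Y i).sup x)
      rw [if_neg h] at this
      rw [this]
      exact ihφ _ _ hX hY

/-- The poly-constancy atom `=c(x¹ / x²)` cannot be expressed in `PFO(dep)`:
there is no vocabulary `τ` and `PFO(dep)` formula `φ(x¹, x²)` (with free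
variables among `x¹` of sort 1 and `x²` of sort 2) such that for every
structure and every polyteam `X⃗ = (X₁, X₂)` (all other teams being
singletons), `φ` is satisfied iff `s(x¹) = s'(x²)` for all `s ∈ X₁` and
`s' ∈ X₂`. -/
theorem polyconstancy_not_in_PFO_dep (x1 x2 : ℕ) :
    ¬ ∃ (τ : Type) (ar : τ → ℕ) (φ : PFO τ ar Dep),
      (PFO.fv Dep.fv φ 1 ⊆ {x1}) ∧ (PFO.fv Dep.fv φ 2 ⊆ {x2}) ∧
      (∀ k : ℕ, k ≠ 1 → k ≠ 2 → PFO.fv Dep.fv φ k = ∅) ∧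
      ∀ (A : Type) (M : Struc τ ar A) (s₀ : ℕ → A) (X₁ X₂ : Team A),
        (PFO.Sat Dep.Sat M φ
            (fun k => if k = 1 then X₁ else if k = 2 then X₂ else {s₀}) ↔
          ∀ s ∈ X₁, ∀ s' ∈ X₂, s x1 = s' x2) := by
  rintro ⟨τ, ar, φ, -, -, -, h⟩
  set M : Struc τ ar Bool := ⟨fun _ _ => True⟩ with hM
  set s₀ : ℕ → Bool := fun _ => false with hs₀
  set cf : ℕ → Bool := fun _ => false with hcf
  set ct : ℕ → Bool := fun _ => true with hct
  have hff : PFO.Sat Dep.Sat M φ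
      (fun k => if k = 1 then ({cf} : Team Bool) else if k = 2 then {cf} else {s₀}) :=
    (h Bool M s₀ {cf} {cf}).mpr (by rintro s rfl s' rfl; rfl)
  have htt : PFO.Sat Dep.Sat M φ
      (fun k => if k = 1 then ({ct} : Team Bool) else if k = 2 then {ct} else {s₀}) :=
    (h Bool M s₀ {ct} {ct}).mpr (by rintro s rfl s' rfl; rfl)
  have hmix := mixPT_sat M φ _ _ hff htt
  have heq : mixPT
      (fun k => if k = 1 then ({cf} : Team Bool) else if k = 2 then {cf} else {s₀})
      (fun k => if k = 1 then ({ct} : Team Bool) else if k = 2 then {ct} else {s₀}) =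
      (fun k => if k = 1 then ({cf} : Team Bool) else if k = 2 then {ct} else {s₀}) := by
    funext k
    by_cases h1 : k = 1 <;> by_cases h2 : k = 2 <;> simp_all [mixPT]
  rw [heq] at hmix
  have := (h Bool M s₀ {cf} {ct}).mp hmix cf rfl ct rfl
  simp [hcf, hct] at this
end

section
/- Equivalence (1): the poly-dependence atom =(x̄¹, ȳ¹ / ū², v̄²) is equivalent to the poly-independence atom x̄¹, ū² / x̄¹ ⊥ ȳ¹ / ȳ¹ ; v̄² / ȳ¹; that is, for every structure 𝔄 and polyteam X⃗ = (X₁, X₂) (with the relevant variables in the team domains): [for all s ∈ X₁ and s' ∈ X₂, s(x̄¹) = s'(ū²) implies s(ȳ¹) = s'(v̄²)] if and only if [for all s ∈ X₁ and s' ∈ X₂ with s(x̄¹) = s'(ū²) there exists s'' ∈ X₁ with s''(x̄¹ȳ¹) = s(x̄¹ȳ¹) and s''(ȳ¹) = s'(v̄²)]. -/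
theorem pdep_eq_pind {A : Type} (X₁ X₂ : Set (ℕ → A))
    (x y : List ℕ) (u v : List ℕ)
    (hxu : x.length = u.length) (hyv : y.length = v.length) :
    (∀ s ∈ X₁, ∀ s' ∈ X₂, x.map s = u.map s' → y.map s = v.map s') ↔
    (∀ s ∈ X₁, ∀ s' ∈ X₂, x.map s = u.map s' →
      ∃ s'' ∈ X₁, (x ++ y).map s'' = (x ++ y).map s ∧ y.map s'' = v.map s') := by
  constructor
  · intro h s hs s' hs' hxu'
    exact ⟨s, hs, rfl, h s hs s' hs' hxu'⟩
  · intro h s hs s' hs' hxu'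
    obtain ⟨s'', _, h1, h2⟩ := h s hs s' hs' hxu'
    simp only [List.map_append] at h1
    have := (List.append_inj_right h1 (by simp)).symm
    rw [this, h2]
end

section
/- Equivalence (2): the poly-dependence atom =(x̄¹, y¹ / ū², v²) with a single variable on each right-hand side is equivalent to the PFO(pexc) formula ∀z¹ (y¹ = z¹ ∨¹ x̄¹z¹ | ū²v²): for every structure 𝔄 and polyteam X⃗ = (X₁, X₂) with the relevant variables in the team domains, 𝔄 ⊨_X⃗ =(x̄¹, y¹ / ū², v²) if and only if 𝔄 ⊨_X⃗ ∀z¹ (y¹ = z¹ ∨¹ x̄¹z¹ | ū²v²), where z¹ is a fresh variable of sort 1. -/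
universe u

/-- A poly-exclusion atom `x̄ⁱ | ȳʲ`. -/
structure PExc where
  i : ℕ
  j : ℕ
  x : List ℕ
  y : List ℕ
  hxy : x.length = y.length

/-- Satisfaction of a poly-exclusion atom by a polyteam. -/
def PExc.Sat {A : Type} (X : PolyTeam A) (d : PExc) : Prop :=
  ∀ s ∈ X d.i, ∀ s' ∈ X d.j, d.x.map s ≠ d.y.map s'

/-- Equivalence (2): the poly-dependence atom `=(x̄¹, y¹ / ū², v²)` (with a
single variable on each right-hand side) is equivalent to the `PFO(pexc)`
formula `∀z¹ (y¹ = z¹ ∨¹ x̄¹z¹ | ū²v²)`, where `z¹` is a fresh variable of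
sort 1.  Here `x` and `y` consist of variables of sort 1, and `u`, `v` of
variables of sort 2. -/
theorem pdep_eq_pexc_formula
    (τ : Type) (ar : τ → ℕ) (A : Type) (M : Struc τ ar A) (X : PolyTeam A)
    (x : List ℕ) (y : ℕ) (u : List ℕ) (v : ℕ)
    (hxu : x.length = u.length)
    (z : ℕ) (hz1 : z ∉ x) (hz2 : z ≠ y) :
    (∀ s ∈ X 1, ∀ s' ∈ X 2, x.map s = u.map s' → s y = s' v) ↔
    PFO.Sat PExc.Sat M
      (PFO.all 1 z (PFO.lor 1 (PFO.eq 1 y z)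
        (PFO.atom ⟨1, 2, x ++ [z], u ++ [v], by simp [hxu]⟩)))
      X := by
  have hmap : ∀ (s s' : ℕ → A), ((x ++ [z]).map s = (u ++ [v]).map s') ↔
      (x.map s = u.map s' ∧ s z = s' v) := by
    intro s s'
    rw [List.map_append, List.map_append]
    constructor
    · intro h
      obtain ⟨h1, h2⟩ := List.append_inj h (by simp [hxu])
      simp at h2
      exact ⟨h1, h2⟩
    · rintro ⟨h1, h2⟩
      simp [h1, h2]
  have hupd : ∀ (s : ℕ → A) (a : A), x.map (Function.update s z a) = x.map s := by
    intro s a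
    apply List.map_congr_left
    intro b hb
    have hbz : b ≠ z := by rintro rfl; exact hz1 hb
    exact Function.update_of_ne hbz _ _
  constructor
  · intro h
    refine ⟨{t | t ∈ (X 1).sup z ∧ t y = t z},
            {t | t ∈ (X 1).sup z ∧ t y ≠ t z}, ?_, ?_, ?_⟩
    · ext t
      simp only [Set.mem_union, Set.mem_setOf_eq, PolyTeam.upd, if_pos rfl]
      tauto
    · intro s hs
      have hs' : s ∈ {t | t ∈ (X 1).sup z ∧ t y = t z} := by
        simpa [PolyTeam.upd] using hs
      exact hs'.2
    · intro s hs s' hs' heq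
      have hsZ : s ∈ {t | t ∈ (X 1).sup z ∧ t y ≠ t z} := by
        simpa [PolyTeam.upd] using hs
      have hs2 : s' ∈ X 2 := by simpa [PolyTeam.upd] using hs'
      obtain ⟨⟨s₀, hs₀, a, rfl⟩, hne⟩ := hsZ
      rw [hmap] at heq
      obtain ⟨h1, h2⟩ := heq
      rw [hupd] at h1
      have hyv : s₀ y = s' v := h s₀ hs₀ s' hs2 h1
      apply hne
      rw [h2, Function.update_of_ne (Ne.symm hz2), hyv]
  · intro hsat s hs s' hs' heq
    obtain ⟨Y, Z, hYZ, hY, hZ⟩ := hsat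
    set t := Function.update s z (s' v) with ht_def
    have ht : t ∈ (X 1).sup z := ⟨s, hs, s' v, rfl⟩
    have htYZ : t ∈ Y ∪ Z := by rw [hYZ]; simpa [PolyTeam.upd] using ht
    rcases htYZ with hY' | hZ'
    · have hty : t y = t z := hY t (by simpa [PolyTeam.upd] using hY')
      rw [ht_def, Function.update_of_ne (Ne.symm hz2), Function.update_self] at hty
      exact hty
    · exfalso
      have := hZ t (by simpa [PolyTeam.upd] using hZ') s'
        (by simpa [PolyTeam.upd] using hs')
      apply this
      rw [hmap]
      exact ⟨by rw [ht_def, hupd, heq], by rw [ht_def, Function.update_self]⟩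
end
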